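/- arXiv:math/0612748 — 2 statements merged into one kernel-verified Lean document; each statement's English description precedes it below -/
import Mathlib

section
/- Let f : [n] → [m] be a surjective function and let E = Λ(e_1,…,e_n) be the exterior algebra over ℤ on generators e_1,…,e_n in degree 1. For 1 ≤ j ≤ m set h_j = Σ_{i : f(i)=j} e_i, and let 𝔞_f be the ideal of E generated by h_1,…,h_m. Then the annihilator ann(𝔞_f) = {x ∈ E : x·u = 0 for all u ∈ 𝔞_f} is the principal ideal of E generated by the product a_f = h_1 h_2 ⋯ h_m. -/
/-!
In the exterior algebra, `a * ι w = ι w * involute a`, so `x` kills the left ideal spanned by the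
`h_j` as soon as it kills each `h_j`. Write `h_j = ι v_j` with `v_j` the indicator of the fibre
`f⁻¹(j)`; evaluation at a point of that fibre gives functionals `d_j` with `d_j v_k = δ_jk`. Right
contraction by `d_j` is a skew derivation, so `x * h_j = 0` forces `x = (x ⌊ d_j) * h_j`, and
`x ⌊ d_j` is still killed by the other `h_k`; peeling off `h_m, …, h_1` in turn exhibits `x` as a
left multiple of `a_f = h_1 ⋯ h_m`. Conversely `a_f * h_j = 0`, being a wedge product with a
repeated factor.
-/

noncomputable section

/-- The `i`-th degree-one generator `eᵢ` of the exterior algebra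
`Λ(e₁,…,eₙ)` over `ℤ`. -/
def extGen (n : ℕ) (i : Fin n) : ExteriorAlgebra ℤ (Fin n → ℤ) :=
  ExteriorAlgebra.ι ℤ (Pi.single i 1)

/-- For a coordinate map `f : [n] → [m]`, the element
`h_j = ∑_{i : f i = j} eᵢ` of the exterior algebra. -/
def hGen {n m : ℕ} (f : Fin n → Fin m) (j : Fin m) :
    ExteriorAlgebra ℤ (Fin n → ℤ) :=
  ∑ i ∈ Finset.univ.filter (fun i => f i = j), extGen n i

/-- The ordered product `a_f = h₁ h₂ ⋯ h_m`. -/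
def aGen {n m : ℕ} (f : Fin n → Fin m) : ExteriorAlgebra ℤ (Fin n → ℤ) :=
  ((List.finRange m).map (hGen f)).prod

namespace ExteriorAlgebra

variable {R M : Type*} [CommRing R] [AddCommGroup M] [Module R M]

theorem mul_ι_eq_ι_mul_involute (a : ExteriorAlgebra R M) (w : M) :
    a * ι R w = ι R w * CliffordAlgebra.involute a := by
  induction a using ExteriorAlgebra.induction with
  | algebraMap r => simp [Algebra.commutes]
  | ι x =>
    rw [CliffordAlgebra.involute_ι, mul_neg]
    exact eq_neg_of_add_eq_zero_left (ι_add_mul_swap x w)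
  | mul a b ha hb => rw [map_mul, mul_assoc, hb, ← mul_assoc, ha, mul_assoc]
  | add a b ha hb => rw [map_add, add_mul, ha, hb, mul_add]

theorem mul_mul_ι_eq_zero {y : ExteriorAlgebra R M} {w : M} (hy : y * ι R w = 0)
    (r : ExteriorAlgebra R M) : y * r * ι R w = 0 := by
  rw [mul_assoc, mul_ι_eq_ι_mul_involute, ← mul_assoc, hy, zero_mul]

theorem forall_mem_span_range_ι_mul_eq_zero_iff {J : Type*} (v : J → M)
    (x : ExteriorAlgebra R M) :
    (∀ u ∈ Ideal.span (Set.range fun j => ι R (v j)), x * u = 0) ↔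
      ∀ j, x * ι R (v j) = 0 := by
  refine ⟨fun hx j => hx _ (Ideal.subset_span ⟨j, rfl⟩), fun hx u hu => ?_⟩
  induction hu using Submodule.span_induction generalizing x with
  | mem u hu =>
    obtain ⟨j, rfl⟩ := hu
    exact hx j
  | zero => exact mul_zero x
  | add a b _ _ ha hb => rw [mul_add, ha x hx, hb x hx, add_zero]
  | smul r u _ hu =>
    rw [smul_eq_mul, ← mul_assoc]
    exact hu _ fun j => mul_mul_ι_eq_zero (hx j) r

theorem ιMulti_succ_apply' {k : ℕ} (v : Fin (k + 1) → M) :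
    ιMulti R (k + 1) v = ιMulti R k (Fin.init v) * ι R (v (Fin.last k)) := by
  simp only [ιMulti_apply, List.ofFn_succ', List.prod_concat, Fin.init]

theorem ιMulti_mul_ι_self {k : ℕ} (v : Fin k → M) (j : Fin k) :
    ιMulti R k v * ι R (v j) = 0 := by
  have h := ιMulti_succ_apply' (R := R) (Fin.snoc v (v j))
  rw [Fin.init_snoc, Fin.snoc_last] at h
  rw [← h]
  refine ιMulti_eq_zero_of_not_inj fun hinj => ?_
  exact (Fin.castSucc_lt_last j).ne (hinj (by simp))

theorem contractRight_mul_ι_of_mul_ι_eq_zero {y : ExteriorAlgebra R M} {u : M}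
    (hy : y * ι R u = 0) (d : Module.Dual R M) :
    CliffordAlgebra.contractRight y d * ι R u = d u • y := by
  have h := CliffordAlgebra.contractRight_mul_ι (d := d) u y
  rw [hy, map_zero, LinearMap.zero_apply] at h
  exact (sub_eq_zero.mp h.symm).symm

theorem exists_eq_mul_ιMulti_of_mul_ι_eq_zero {k : ℕ} (v : Fin k → M)
    (d : Fin k → Module.Dual R M) (hd : ∀ i j, d i (v j) = if i = j then 1 else 0)
    (y : ExteriorAlgebra R M) (hy : ∀ j, y * ι R (v j) = 0) :
    ∃ w, y = w * ιMulti R k v := by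
  induction k generalizing y with
  | zero => exact ⟨y, by simp⟩
  | succ k ih =>
    set z := CliffordAlgebra.contractRight y (d (Fin.last k))
    have hyz : y = z * ι R (v (Fin.last k)) := by
      rw [contractRight_mul_ι_of_mul_ι_eq_zero (hy _), hd, if_pos rfl, one_smul]
    have hz : ∀ j, z * ι R (Fin.init v j) = 0 := fun j => by
      rw [Fin.init, contractRight_mul_ι_of_mul_ι_eq_zero (hy _), hd,
        if_neg (Fin.castSucc_lt_last j).ne', zero_smul]
    obtain ⟨w, hw⟩ := ih (Fin.init v) (Fin.init d)
      (fun i j => by simp only [Fin.init, hd, Fin.castSucc_inj]) z hz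
    exact ⟨w, by rw [hyz, hw, ιMulti_succ_apply', mul_assoc]⟩

theorem mem_span_singleton_ιMulti_iff {k : ℕ} (v : Fin k → M)
    (d : Fin k → Module.Dual R M) (hd : ∀ i j, d i (v j) = if i = j then 1 else 0)
    (x : ExteriorAlgebra R M) :
    x ∈ Ideal.span {ιMulti R k v} ↔ ∀ j, x * ι R (v j) = 0 := by
  rw [Ideal.mem_span_singleton']
  constructor
  · rintro ⟨w, rfl⟩ j
    rw [mul_assoc, ιMulti_mul_ι_self, mul_zero]
  · intro hx
    obtain ⟨w, hw⟩ := exists_eq_mul_ιMulti_of_mul_ι_eq_zero v d hd x hx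
    exact ⟨w, hw.symm⟩

end ExteriorAlgebra

open ExteriorAlgebra

section Coordinate

variable {n m : ℕ} (f : Fin n → Fin m)

def fiberIndicator (j : Fin m) : Fin n → ℤ := fun i => if f i = j then 1 else 0

theorem hGen_eq_ι_fiberIndicator (j : Fin m) : hGen f j = ι ℤ (fiberIndicator f j) := by
  have : ∑ i ∈ Finset.univ.filter (fun i => f i = j), Pi.single i 1 = fiberIndicator f j := by
    ext i
    simp [fiberIndicator, Finset.sum_apply, Pi.single_apply]
  simp only [hGen, extGen, ← map_sum, this]

theorem aGen_eq_ιMulti : aGen f = ιMulti ℤ m (fiberIndicator f) := by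
  simp only [aGen, ιMulti_apply, List.ofFn_eq_map, funext (hGen_eq_ι_fiberIndicator f)]

theorem fiberIndicator_surjInv (hf : Function.Surjective f) (j k : Fin m) :
    fiberIndicator f k (Function.surjInv hf j) = if j = k then 1 else 0 := by
  simp [fiberIndicator, Function.surjInv_eq hf j]

end Coordinate

/-- For a surjective `f : [n] → [m]`, the annihilator
`{x ∈ E : x * u = 0 for all u in the ideal 𝔞_f generated by h₁,…,h_m}`
is exactly the principal ideal of `E` generated by the product
`a_f = h₁ h₂ ⋯ h_m`. -/
theorem annihilator_of_coordinate_ideal_is_principal {n m : ℕ}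
    (f : Fin n → Fin m) (hf : Function.Surjective f) :
    ∀ x : ExteriorAlgebra ℤ (Fin n → ℤ),
      (∀ u ∈ Ideal.span (Set.range (hGen f)), x * u = 0) ↔
      x ∈ Ideal.span {aGen f} := by
  intro x
  rw [funext (hGen_eq_ι_fiberIndicator f), aGen_eq_ιMulti,
    forall_mem_span_range_ι_mul_eq_zero_iff,
    mem_span_singleton_ιMulti_iff _ (fun j => LinearMap.proj (Function.surjInv hf j))
      (fiberIndicator_surjInv f hf)]
end
end

section
/- Let k be a field, K a simplicial complex on [n], and E = Λ_k(e_1,…,e_n) the exterior algebra over k. Let J_K ⊆ E be the ideal generated by the monomials e_σ for σ ∉ K, and let K★ = {σ ⊆ [n] : [n]∖σ ∉ K} be the combinatorial Alexander dual of K. Then the annihilator of J_K in E equals J_{K★}, the ideal generated by the monomials e_τ with τ ∉ K★. -/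
noncomputable section

variable (k : Type) [Field k]

/-- The exterior monomial `e_σ = e_{i₁} ⋯ e_{i_r}` (indices in increasing
order) in the exterior algebra `Λ_k(e₁,…,eₙ)`. -/
def extMonomial {n : ℕ} (σ : Finset (Fin n)) : ExteriorAlgebra k (Fin n → k) :=
  ((σ.sort (· ≤ ·)).map fun i => ExteriorAlgebra.ι k (Pi.single i 1)).prod

/-- The exterior Stanley–Reisner ideal `J_K` of a simplicial complex `K` on
`[n]`: the ideal of the exterior algebra generated by the monomials `e_σ`
with `σ ∉ K`. -/
def extSRIdeal {n : ℕ} (K : Set (Finset (Fin n))) :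
    Ideal (ExteriorAlgebra k (Fin n → k)) :=
  Ideal.span {x | ∃ σ : Finset (Fin n), σ ∉ K ∧ x = extMonomial k σ}

/-- The combinatorial Alexander dual `K★ = {σ ⊆ [n] : [n] ∖ σ ∉ K}`. -/
def alexanderDual {n : ℕ} (K : Set (Finset (Fin n))) : Set (Finset (Fin n)) :=
  {σ | Finset.univ \ σ ∉ K}

/-!
The monomials `e_σ` form a `k`-basis of `E` (Mathlib's basis of the exterior algebra), and
`e_σ e_τ = ±e_{σ ∪ τ}` for disjoint `σ, τ`, while `e_σ e_τ = 0` otherwise.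

If `[n] ∖ τ ∈ K`, every generator `e_σ` of `J_K` has `σ ∩ τ ≠ ∅` because `K` is closed under
subsets, so `e_τ y e_σ = 0` for all `y`; hence `J_{K★}` annihilates `J_K`. Conversely, right
multiplication by `e_τ` sends the `e_ρ`-coefficient of `x` (for `ρ` disjoint from `τ`) to `±` the
`e_{ρ ∪ τ}`-coefficient of `x e_τ`. If `x` annihilates `J_K` and `σ ∈ K★`, then
`e_{[n] ∖ σ} ∈ J_K`, so the `e_σ`-coefficient of `x` vanishes; thus `x` is a combination of
monomials `e_σ` with `σ ∉ K★`.
-/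

open ExteriorAlgebra

namespace ExtStanleyReisner

variable {n : ℕ}

abbrev monomialBasis : Module.Basis (Finset (Fin n)) k (ExteriorAlgebra k (Fin n → k)) :=
  (Pi.basisFun k (Fin n)).ExteriorAlgebra

theorem monomialBasis_apply (σ : Finset (Fin n)) : monomialBasis k σ = extMonomial k σ := by
  rw [ExteriorAlgebra.basis_apply_ofCard _ rfl, ιMulti_family, ιMulti_apply, extMonomial,
    ← List.ofFn_getElem_eq_map, List.ofFn_congr (Finset.length_sort (· ≤ ·) (s := σ))]
  congr 2 with i
  simp [Set.powersetCard.ofFinEmbEquiv_symm_apply, Finset.orderEmbOfFin_apply]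

variable {k}

theorem extMonomial_mul_of_not_disjoint {σ τ : Finset (Fin n)} (h : ¬Disjoint σ τ) :
    extMonomial k σ * extMonomial k τ = 0 := by
  simpa only [monomialBasis_apply, Set.powersetCard.val_ofCard] using
    basis_mul_of_not_disjoint (Pi.basisFun k (Fin n)) (Set.powersetCard.ofCard rfl)
      (Set.powersetCard.ofCard rfl) h

theorem extMonomial_mul_of_disjoint {σ τ : Finset (Fin n)} (h : Disjoint σ τ) :
    ∃ ε : ℤˣ, extMonomial k σ * extMonomial k τ = ε • extMonomial k (σ ∪ τ) := by
  have := basis_mul_of_disjoint (Pi.basisFun k (Fin n)) (Set.powersetCard.ofCard rfl)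
    (Set.powersetCard.ofCard rfl) h
  simp only [monomialBasis_apply, Set.powersetCard.val_ofCard] at this
  exact ⟨_, this.trans (by rw [← Finset.disjUnion_eq_union _ _ h]; rfl)⟩

theorem exists_extMonomial_mul_eq_smul (σ τ : Finset (Fin n)) :
    ∃ c : k, extMonomial k σ * extMonomial k τ = c • extMonomial k (σ ∪ τ) := by
  by_cases h : Disjoint σ τ
  · obtain ⟨ε, hε⟩ := extMonomial_mul_of_disjoint (k := k) h
    exact ⟨(ε : ℤ), by rw [hε, Int.cast_smul_eq_zsmul, Units.smul_def]⟩
  · exact ⟨0, by rw [extMonomial_mul_of_not_disjoint h, zero_smul]⟩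

theorem extMonomial_mul_mul_extMonomial_of_not_disjoint {σ τ : Finset (Fin n)}
    (h : ¬Disjoint τ σ) (y : ExteriorAlgebra k (Fin n → k)) :
    extMonomial k τ * y * extMonomial k σ = 0 := by
  rw [← (monomialBasis k).sum_repr y, Finset.mul_sum, Finset.sum_mul]
  refine Finset.sum_eq_zero fun ρ _ => ?_
  obtain ⟨c, hc⟩ := exists_extMonomial_mul_eq_smul (k := k) τ ρ
  have hτρ : ¬Disjoint (τ ∪ ρ) σ := fun hd => h (hd.mono_left Finset.subset_union_left)
  rw [monomialBasis_apply, mul_smul_comm, hc, smul_mul_assoc, smul_mul_assoc,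
    extMonomial_mul_of_not_disjoint hτρ, smul_zero, smul_zero]

theorem monomialBasis_repr_extMonomial_mul_of_ne {π ρ τ : Finset (Fin n)} (hρ : Disjoint ρ τ)
    (hπ : π ≠ ρ) : (monomialBasis k).repr (extMonomial k π * extMonomial k τ) (ρ ∪ τ) = 0 := by
  by_cases hπτ : Disjoint π τ
  · obtain ⟨ε, hε⟩ := extMonomial_mul_of_disjoint (k := k) hπτ
    have hne : π ∪ τ ≠ ρ ∪ τ := fun heq => hπ <| by
      rw [← Finset.union_sdiff_cancel_right hπτ, heq, Finset.union_sdiff_cancel_right hρ]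
    rw [hε, Units.smul_def, ← monomialBasis_apply, map_zsmul, Module.Basis.repr_self,
      Finsupp.smul_apply, Finsupp.single_eq_of_ne hne.symm, smul_zero]
  · rw [extMonomial_mul_of_not_disjoint hπτ, map_zero, Finsupp.zero_apply]

theorem monomialBasis_repr_mul_extMonomial (x : ExteriorAlgebra k (Fin n → k))
    {ρ τ : Finset (Fin n)} (hρ : Disjoint ρ τ) :
    ∃ ε : ℤˣ, (monomialBasis k).repr (x * extMonomial k τ) (ρ ∪ τ) =
      ε • (monomialBasis k).repr x ρ := by
  obtain ⟨ε, hε⟩ := extMonomial_mul_of_disjoint (k := k) hρ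
  refine ⟨ε, ?_⟩
  conv_lhs => rw [← (monomialBasis k).sum_repr x]
  rw [Finset.sum_mul, map_sum, Finsupp.finsetSum_apply, Finset.sum_eq_single ρ
    (fun π _ hπ => by rw [smul_mul_assoc, map_smul, Finsupp.smul_apply, monomialBasis_apply,
      monomialBasis_repr_extMonomial_mul_of_ne hρ hπ, smul_zero])
    (fun h => absurd (Finset.mem_univ ρ) h)]
  rw [smul_mul_assoc, map_smul, Finsupp.smul_apply, monomialBasis_apply, hε, Units.smul_def,
    ← monomialBasis_apply, map_zsmul, Module.Basis.repr_self, Finsupp.smul_apply,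
    Finsupp.single_eq_same, Units.smul_def, smul_eq_mul, zsmul_eq_mul, zsmul_eq_mul, mul_one,
    mul_comm]

theorem monomialBasis_repr_eq_zero_of_mul_extMonomial_eq_zero {x : ExteriorAlgebra k (Fin n → k)}
    {ρ τ : Finset (Fin n)} (hx : x * extMonomial k τ = 0) (hρ : Disjoint ρ τ) :
    (monomialBasis k).repr x ρ = 0 := by
  obtain ⟨ε, hε⟩ := monomialBasis_repr_mul_extMonomial x hρ
  rwa [hx, map_zero, Finsupp.zero_apply, eq_comm, smul_eq_zero_iff_eq] at hε

theorem mem_extSRIdeal_of_forall_repr_ne_zero {L : Set (Finset (Fin n))}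
    {x : ExteriorAlgebra k (Fin n → k)} (h : ∀ σ, (monomialBasis k).repr x σ ≠ 0 → σ ∉ L) :
    x ∈ extSRIdeal k L := by
  rw [← (monomialBasis k).sum_repr x]
  refine Ideal.sum_mem _ fun σ _ => ?_
  by_cases hσ : (monomialBasis k).repr x σ = 0
  · rw [hσ, zero_smul]
    exact zero_mem _
  · exact Submodule.smul_of_tower_mem _ _
      (Ideal.subset_span ⟨σ, h σ hσ, monomialBasis_apply k σ⟩)

variable {K : Set (Finset (Fin n))}

theorem extMonomial_mul_eq_zero_of_mem_extSRIdeal (hK : ∀ σ ∈ K, ∀ τ ⊆ σ, τ ∈ K)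
    {τ : Finset (Fin n)} (hτ : Finset.univ \ τ ∈ K) {u : ExteriorAlgebra k (Fin n → k)}
    (hu : u ∈ extSRIdeal k K) : extMonomial k τ * u = 0 := by
  -- `Ideal` means left ideal, so the induction has to carry an arbitrary left factor `y`.
  suffices ∀ y, extMonomial k τ * (y * u) = 0 by simpa using this 1
  induction hu using Submodule.span_induction with
  | mem w hw =>
    obtain ⟨σ, hσ, rfl⟩ := hw
    have hτσ : ¬Disjoint τ σ := fun hd =>
      hσ (hK _ hτ σ (Finset.subset_sdiff.2 ⟨Finset.subset_univ σ, hd.symm⟩))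
    intro y
    rw [← mul_assoc]
    exact extMonomial_mul_mul_extMonomial_of_not_disjoint hτσ y
  | zero => simp
  | add a b _ _ ha hb => intro y; rw [mul_add, mul_add, ha, hb, add_zero]
  | smul r a _ ha => intro y; rw [smul_eq_mul, ← mul_assoc y, ha]

theorem mul_eq_zero_of_mem_extSRIdeal_alexanderDual (hK : ∀ σ ∈ K, ∀ τ ⊆ σ, τ ∈ K)
    {x u : ExteriorAlgebra k (Fin n → k)} (hx : x ∈ extSRIdeal k (alexanderDual K))
    (hu : u ∈ extSRIdeal k K) : x * u = 0 := by
  induction hx using Submodule.span_induction with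
  | mem w hw =>
    obtain ⟨τ, hτ, rfl⟩ := hw
    exact extMonomial_mul_eq_zero_of_mem_extSRIdeal hK (not_not.1 hτ) hu
  | zero => rw [zero_mul]
  | add a b _ _ ha hb => rw [add_mul, ha, hb, add_zero]
  | smul r a _ ha => rw [smul_eq_mul, mul_assoc, ha, mul_zero]

theorem mem_extSRIdeal_alexanderDual_of_forall_mul_eq_zero {x : ExteriorAlgebra k (Fin n → k)}
    (hx : ∀ u ∈ extSRIdeal k K, x * u = 0) : x ∈ extSRIdeal k (alexanderDual K) :=
  mem_extSRIdeal_of_forall_repr_ne_zero fun _ hσ hσK => hσ <|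
    monomialBasis_repr_eq_zero_of_mul_extMonomial_eq_zero
      (hx _ (Ideal.subset_span ⟨_, hσK, rfl⟩)) Finset.disjoint_sdiff

end ExtStanleyReisner

open ExtStanleyReisner

/-- For a field `k` and a simplicial complex `K` on `[n]`,
the annihilator of the exterior Stanley–Reisner ideal `J_K` in the exterior
algebra `E = Λ_k(e₁,…,eₙ)` is the Stanley–Reisner ideal `J_{K★}` of the
combinatorial Alexander dual of `K`. -/
theorem annihilator_ext_stanley_reisner_eq_alexander_dual {n : ℕ}
    (K : Set (Finset (Fin n))) (hK : ∀ σ ∈ K, ∀ τ ⊆ σ, τ ∈ K) :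
    ∀ x : ExteriorAlgebra k (Fin n → k),
      (∀ u ∈ extSRIdeal k K, x * u = 0) ↔ x ∈ extSRIdeal k (alexanderDual K) := fun _ =>
  ⟨mem_extSRIdeal_alexanderDual_of_forall_mul_eq_zero,
    fun hx _ hu => mul_eq_zero_of_mem_extSRIdeal_alexanderDual hK hx hu⟩
end
end
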